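/- arXiv:2302.09039 — 5 statements merged into one kernel-verified Lean document; each statement's English description precedes it below -/
import Mathlib

section
/- Let A be uniformly strongly elliptic with ellipticity ratio ρ(A) = λ(A)/Λ(A). Then (1 − ρ(A))/(1 + ρ(A)) ≤ d(A). -/
open MeasureTheory

noncomputable section

/-- `ℝ^d` with its Euclidean structure and Lebesgue measure. -/
abbrev Rd (d : ℕ) : Type := EuclideanSpace ℝ (Fin d)

/-- `(ℂ^N)^d ≅ ℂ^{dN}` with its Euclidean (Hermitian) structure. -/
abbrev CNd (d N : ℕ) : Type := EuclideanSpace ℂ (Fin d × Fin N)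

/-- The lower ellipticity constant `λ(A) = essinf_x min_{|ξ|=1} Re⟨A(x)ξ, ξ⟩`. -/
def lamE {d N : ℕ} (A : Rd d → (CNd d N →L[ℂ] CNd d N)) : ℝ :=
  essInf (fun x => sInf {r : ℝ | ∃ ξ : CNd d N, ‖ξ‖ = 1 ∧ r = (inner ℂ (A x ξ) ξ : ℂ).re}) volume

/-- The upper ellipticity constant `Λ(A) = esssup_x ‖A(x)‖`. -/
def LamE {d N : ℕ} (A : Rd d → (CNd d N →L[ℂ] CNd d N)) : ℝ :=
  essSup (fun x => ‖A x‖) volume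

/-- The distance function `d(A) = inf_{t ≥ 0} esssup_x ‖I - t A(x)‖`. -/
def distE {d N : ℕ} (A : Rd d → (CNd d N →L[ℂ] CNd d N)) : ℝ :=
  sInf {s : ℝ | ∃ t : ℝ, 0 ≤ t ∧
    s = essSup (fun x => ‖(1 : CNd d N →L[ℂ] CNd d N) - (t : ℂ) • A x‖) volume}

/-! For a unit vector `ξ`, `Re⟨(I - tA(x))ξ, ξ⟩ = 1 - t Re⟨A(x)ξ, ξ⟩`, so `‖I - tA(x)‖ ≥ 1 - tλ(A)`
almost everywhere, while the reverse triangle inequality gives `‖I - tA(x)‖ ≥ t‖A(x)‖ - 1`. Hence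
`esssup_x ‖I - tA(x)‖ ≥ max (1 - tλ, tΛ - 1)` for every `t ≥ 0`, and this maximum is at least
`(Λ - λ)/(Λ + λ)`, its value at the crossing point `t = 2/(Λ + λ)`. -/

open Filter

lemma exists_norm_eq_one (𝕜 : Type*) {E : Type*} [RCLike 𝕜] [NormedAddCommGroup E]
    [NormedSpace 𝕜 E] [Nontrivial E] : ∃ ξ : E, ‖ξ‖ = 1 := by
  obtain ⟨x, hx⟩ := exists_ne (0 : E)
  exact ⟨_, norm_smul_inv_norm (𝕜 := 𝕜) hx⟩

section OneSubSmul

variable {𝕜 E : Type*} [RCLike 𝕜] [NormedAddCommGroup E] [NormedSpace 𝕜 E] (B : E →L[𝕜] E) {t : ℝ}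

lemma norm_one_sub_smul_le (ht : 0 ≤ t) : ‖1 - (t : 𝕜) • B‖ ≤ 1 + t * ‖B‖ := by
  have h1 : ‖(1 : E →L[𝕜] E)‖ ≤ 1 := ContinuousLinearMap.norm_id_le
  calc ‖1 - (t : 𝕜) • B‖ ≤ ‖(1 : E →L[𝕜] E)‖ + ‖(t : 𝕜) • B‖ := norm_sub_le _ _
    _ ≤ 1 + t * ‖B‖ := by rw [norm_smul, RCLike.norm_ofReal, abs_of_nonneg ht]; linarith

lemma mul_opNorm_sub_one_le (ht : 0 ≤ t) : t * ‖B‖ - 1 ≤ ‖1 - (t : 𝕜) • B‖ := by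
  have h1 : ‖(1 : E →L[𝕜] E)‖ ≤ 1 := ContinuousLinearMap.norm_id_le
  have h := norm_sub_norm_le ((t : 𝕜) • B) 1
  rw [norm_smul, RCLike.norm_ofReal, abs_of_nonneg ht, norm_sub_rev] at h
  linarith

end OneSubSmul

section NumericalRange

variable {𝕜 E : Type*} [RCLike 𝕜] [NormedAddCommGroup E] [InnerProductSpace 𝕜 E]
  (B : E →L[𝕜] E)

def reNumRangeInf : ℝ :=
  sInf {r : ℝ | ∃ ξ : E, ‖ξ‖ = 1 ∧ r = RCLike.re (inner 𝕜 (B ξ) ξ)}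

lemma reNumRangeInf_of_subsingleton [Subsingleton E] : reNumRangeInf B = 0 := by
  simp [reNumRangeInf, Subsingleton.elim _ (0 : E)]

lemma abs_re_inner_le_opNorm {ξ : E} (hξ : ‖ξ‖ = 1) : |RCLike.re (inner 𝕜 (B ξ) ξ)| ≤ ‖B‖ :=
  calc |RCLike.re (inner 𝕜 (B ξ) ξ)| ≤ ‖inner 𝕜 (B ξ) ξ‖ := RCLike.abs_re_le_norm _
    _ ≤ ‖B ξ‖ * ‖ξ‖ := norm_inner_le_norm _ _
    _ ≤ ‖B‖ * ‖ξ‖ * ‖ξ‖ := by gcongr; exact B.le_opNorm ξ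
    _ = ‖B‖ := by rw [hξ, mul_one, mul_one]

lemma re_inner_one_sub_smul {ξ : E} (hξ : ‖ξ‖ = 1) (t : ℝ) :
    RCLike.re (inner 𝕜 ((1 - (t : 𝕜) • B) ξ) ξ) = 1 - t * RCLike.re (inner 𝕜 (B ξ) ξ) := by
  simp [inner_sub_left, inner_smul_left, inner_self_eq_norm_sq_to_K, hξ]

lemma reNumRangeInf_le {ξ : E} (hξ : ‖ξ‖ = 1) : reNumRangeInf B ≤ RCLike.re (inner 𝕜 (B ξ) ξ) := by
  refine csInf_le ⟨-‖B‖, ?_⟩ ⟨ξ, hξ, rfl⟩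
  rintro r ⟨η, hη, rfl⟩
  exact neg_le_of_abs_le (abs_re_inner_le_opNorm B hη)

variable [Nontrivial E]

lemma le_reNumRangeInf {c : ℝ} (h : ∀ ξ : E, ‖ξ‖ = 1 → c ≤ RCLike.re (inner 𝕜 (B ξ) ξ)) :
    c ≤ reNumRangeInf B := by
  obtain ⟨ξ, hξ⟩ := exists_norm_eq_one 𝕜 (E := E)
  refine le_csInf ⟨_, ξ, hξ, rfl⟩ ?_
  rintro r ⟨η, hη, rfl⟩
  exact h η hη

lemma abs_reNumRangeInf_le_opNorm : |reNumRangeInf B| ≤ ‖B‖ := by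
  obtain ⟨ξ, hξ⟩ := exists_norm_eq_one 𝕜 (E := E)
  refine abs_le.2 ⟨?_, ?_⟩
  · exact le_reNumRangeInf B fun η hη => neg_le_of_abs_le (abs_re_inner_le_opNorm B hη)
  · exact (reNumRangeInf_le B hξ).trans (le_of_abs_le (abs_re_inner_le_opNorm B hξ))

lemma one_sub_mul_reNumRangeInf_le {t : ℝ} (ht : 0 ≤ t) :
    1 - t * reNumRangeInf B ≤ ‖1 - (t : 𝕜) • B‖ := by
  rcases ht.eq_or_lt with rfl | ht
  · simp
  have h : (1 - ‖1 - (t : 𝕜) • B‖) / t ≤ reNumRangeInf B := by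
    refine le_reNumRangeInf B fun ξ hξ => (div_le_iff₀' ht).2 ?_
    have := (re_inner_one_sub_smul B hξ t).symm.trans_le
      (le_of_abs_le (abs_re_inner_le_opNorm _ hξ))
    linarith
  linarith [(div_le_iff₀' ht).1 h]

end NumericalRange

lemma one_sub_div_div_one_add_div_le {l L t s : ℝ} (hl : 0 < l) (hlL : l ≤ L)
    (h₁ : 1 - t * l ≤ s) (h₂ : t * L - 1 ≤ s) : (1 - l / L) / (1 + l / L) ≤ s := by
  have hL : 0 < L := hl.trans_le hlL
  have hLl : 0 < L + l := by positivity
  rw [show (1 - l / L) / (1 + l / L) = (L - l) / (L + l) by field_simp, div_le_iff₀ hLl]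
  nlinarith [mul_le_mul_of_nonneg_left h₁ hL.le, mul_le_mul_of_nonneg_left h₂ hl.le]

section EssentialBounds

variable {α : Type*} [MeasurableSpace α] {μ : Measure α}

section RealValued

variable [NeZero μ] {c t s : ℝ}

lemma sub_mul_essInf_le {g : α → ℝ} (ht : 0 ≤ t) (hg : IsBoundedUnder (· ≤ ·) (ae μ) g)
    (h : ∀ᵐ x ∂μ, c - t * g x ≤ s) : c - t * essInf g μ ≤ s := by
  rcases ht.eq_or_lt with rfl | ht
  · obtain ⟨x, hx⟩ := h.exists
    simpa using hx
  have : (c - s) / t ≤ essInf g μ :=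
    le_essInf_of_ae_le _ (h.mono fun x hx => (div_le_iff₀' ht).2 (by linarith))
      hg.isCoboundedUnder_flip
  linarith [(div_le_iff₀' ht).1 this]

lemma mul_essSup_sub_le {f : α → ℝ} (ht : 0 ≤ t) (hf : IsBoundedUnder (· ≥ ·) (ae μ) f)
    (h : ∀ᵐ x ∂μ, t * f x - c ≤ s) : t * essSup f μ - c ≤ s := by
  rcases ht.eq_or_lt with rfl | ht
  · obtain ⟨x, hx⟩ := h.exists
    simpa using hx
  have : essSup f μ ≤ (s + c) / t :=
    essSup_le_of_ae_le _ (h.mono fun x hx => (le_div_iff₀' ht).2 (by linarith))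
      hf.isCoboundedUnder_flip
  linarith [(le_div_iff₀' ht).1 this]

end RealValued

variable {𝕜 E : Type*} [RCLike 𝕜] [NormedAddCommGroup E] {C t : ℝ}

section Normed

variable [NormedSpace 𝕜 E] {A : α → E →L[𝕜] E}

lemma ae_le_essSup_norm_one_sub_smul (hA : ∀ᵐ x ∂μ, ‖A x‖ ≤ C) (ht : 0 ≤ t) :
    ∀ᵐ x ∂μ, ‖1 - (t : 𝕜) • A x‖ ≤ essSup (fun x => ‖1 - (t : 𝕜) • A x‖) μ :=
  ae_le_essSup <| isBoundedUnder_of_eventually_le (a := 1 + t * C) <| hA.mono fun x hx =>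
    (norm_one_sub_smul_le (A x) ht).trans (by gcongr)

lemma mul_essSup_opNorm_sub_one_le [NeZero μ] (hA : ∀ᵐ x ∂μ, ‖A x‖ ≤ C) (ht : 0 ≤ t) :
    t * essSup (fun x => ‖A x‖) μ - 1 ≤ essSup (fun x => ‖1 - (t : 𝕜) • A x‖) μ :=
  mul_essSup_sub_le ht
    (isBoundedUnder_of_eventually_ge (a := 0) (.of_forall fun _ => norm_nonneg _))
    ((ae_le_essSup_norm_one_sub_smul hA ht).mono fun x hx =>
      (mul_opNorm_sub_one_le (A x) ht).trans hx)

end Normed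

variable [InnerProductSpace 𝕜 E] [Nontrivial E] [NeZero μ] {A : α → E →L[𝕜] E}

lemma one_sub_mul_essInf_reNumRangeInf_le (hA : ∀ᵐ x ∂μ, ‖A x‖ ≤ C) (ht : 0 ≤ t) :
    1 - t * essInf (fun x => reNumRangeInf (A x)) μ ≤
      essSup (fun x => ‖1 - (t : 𝕜) • A x‖) μ :=
  sub_mul_essInf_le ht
    (isBoundedUnder_of_eventually_le (a := C) <| hA.mono fun x hx =>
      (le_of_abs_le (abs_reNumRangeInf_le_opNorm (A x))).trans hx)
    ((ae_le_essSup_norm_one_sub_smul hA ht).mono fun x hx =>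
      (one_sub_mul_reNumRangeInf_le (A x) ht).trans hx)

lemma essInf_reNumRangeInf_le_essSup_opNorm (hA : ∀ᵐ x ∂μ, ‖A x‖ ≤ C) :
    essInf (fun x => reNumRangeInf (A x)) μ ≤ essSup (fun x => ‖A x‖) μ := by
  have hinf := ae_essInf_le (μ := μ) (f := fun x => reNumRangeInf (A x)) <|
    isBoundedUnder_of_eventually_ge (a := -C) <| hA.mono fun x hx =>
      neg_le_of_abs_le ((abs_reNumRangeInf_le_opNorm (A x)).trans hx)
  have hsup := ae_le_essSup (μ := μ) (f := fun x => ‖A x‖) <| isBoundedUnder_of_eventually_le hA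
  obtain ⟨x, hx_inf, hx_sup⟩ := (hinf.and hsup).exists
  exact hx_inf.trans ((le_of_abs_le (abs_reNumRangeInf_le_opNorm (A x))).trans hx_sup)

end EssentialBounds

theorem stmt_1_general {d N : ℕ}
    (A : Rd d → (CNd d N →L[ℂ] CNd d N))
    (hlam : 0 < lamE A)
    (hLam : ∃ C : ℝ, ∀ᵐ x ∂(volume : Measure (Rd d)), ‖A x‖ ≤ C) :
    (1 - lamE A / LamE A) / (1 + lamE A / LamE A) ≤ distE A := by
  obtain ⟨C, hC⟩ := hLam
  have hlamE : lamE A = essInf (fun x => reNumRangeInf (A x)) volume := rfl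
  -- On a trivial space there are no unit vectors, and `sInf ∅ = 0` forces `lamE A = 0`.
  have : Nontrivial (CNd d N) := by
    refine not_subsingleton_iff_nontrivial.1 fun _ => hlam.ne' ?_
    simp [hlamE, reNumRangeInf_of_subsingleton]
  refine le_csInf ⟨_, 0, le_rfl, rfl⟩ ?_
  rintro s ⟨t, ht, rfl⟩
  rw [hlamE] at hlam ⊢
  exact one_sub_div_div_one_add_div_le hlam (essInf_reNumRangeInf_le_essSup_opNorm hC)
    (one_sub_mul_essInf_reNumRangeInf_le hC ht) (mul_essSup_opNorm_sub_one_le hC ht)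

/-- for uniformly strongly elliptic `A` with ellipticity ratio
`ρ(A) = λ(A)/Λ(A)`, one has `(1 - ρ(A))/(1 + ρ(A)) ≤ d(A)`. -/
theorem stmt_1 {d N : ℕ} (hd : 3 ≤ d) (hN : 1 ≤ N)
    (A : Rd d → (CNd d N →L[ℂ] CNd d N)) (hmeas : StronglyMeasurable A)
    (hlam : 0 < lamE A)
    (hLam : ∃ C : ℝ, ∀ᵐ x ∂(volume : Measure (Rd d)), ‖A x‖ ≤ C) :
    (1 - lamE A / LamE A) / (1 + lamE A / LamE A) ≤ distE A :=
  stmt_1_general A hlam hLam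

end
end

section
/- Let d ≥ 3 be an integer, c > 0 and D ≥ (c²+1)/((d−2)c). Then the radicand d²/4 − (d(d−1)cD + (d−1)D²)/(1+(c+D)²) is nonnegative, the number b := d/2 − (d²/4 − (d(d−1)cD + (d−1)D²)/(1+(c+D)²))^{1/2} satisfies 1 ≤ b < d/2, and b = 1 if and only if D = (c²+1)/((d−2)c). -/
/-!
Write `E = 1 + (c + D)²` and `R` for the radicand. Two polynomial identities carry the proof:
`4 E R = d² + (d c - (d - 2) D)²`, so `R > 0` and `b < d/2`; and
`R = (d/2 - 1)² - (d - 1)((d - 2) c D - (c² + 1)) / E`, so `R ≤ (d/2 - 1)²`, i.e. `b ≥ 1`,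
exactly when `D` is above the threshold `(c² + 1)/((d - 2) c)`, with equality exactly at it.
-/

/-- The De Giorgi exponent `b = d/2 - (d²/4 - (d(d-1)cD + (d-1)D²)/(1+(c+D)²))^{1/2}`. -/
noncomputable def bExp (d : ℕ) (c D : ℝ) : ℝ :=
  (d : ℝ) / 2 - Real.sqrt ((d : ℝ) ^ 2 / 4 -
    ((d : ℝ) * ((d : ℝ) - 1) * c * D + ((d : ℝ) - 1) * D ^ 2) / (1 + (c + D) ^ 2))

noncomputable def radicand (d c D : ℝ) : ℝ :=
  d ^ 2 / 4 - (d * (d - 1) * c * D + (d - 1) * D ^ 2) / (1 + (c + D) ^ 2)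

section Radicand

variable (d c D : ℝ)

theorem four_mul_mul_radicand :
    4 * (1 + (c + D) ^ 2) * radicand d c D = d ^ 2 + (d * c - (d - 2) * D) ^ 2 := by
  unfold radicand
  field_simp
  ring

theorem radicand_eq_sq_sub :
    radicand d c D =
      (d / 2 - 1) ^ 2 - (d - 1) * ((d - 2) * c * D - (c ^ 2 + 1)) / (1 + (c + D) ^ 2) := by
  unfold radicand
  field_simp
  ring

variable {d}

theorem radicand_pos (hd : d ≠ 0) : 0 < radicand d c D := by
  have hE : 0 < 4 * (1 + (c + D) ^ 2) := by positivity
  refine pos_of_mul_pos_right ?_ hE.le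
  rw [four_mul_mul_radicand]
  positivity

theorem radicand_le_sq_iff (hd : 1 < d) :
    radicand d c D ≤ (d / 2 - 1) ^ 2 ↔ c ^ 2 + 1 ≤ (d - 2) * c * D := by
  rw [radicand_eq_sq_sub, sub_le_self_iff, le_div_iff₀ (by positivity), zero_mul,
    mul_nonneg_iff_of_pos_left (by linarith), sub_nonneg]

theorem radicand_eq_sq_iff (hd : 1 < d) :
    radicand d c D = (d / 2 - 1) ^ 2 ↔ (d - 2) * c * D = c ^ 2 + 1 := by
  have hE : 1 + (c + D) ^ 2 ≠ 0 := by positivity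
  rw [radicand_eq_sq_sub, sub_eq_self, div_eq_zero_iff, or_iff_left hE,
    mul_eq_zero, or_iff_right (by linarith), sub_eq_zero]

end Radicand

section Exponent

variable {d : ℕ} (c D : ℝ)

theorem bExp_eq_sub_sqrt_radicand : bExp d c D = d / 2 - √(radicand d c D) := rfl

theorem bExp_lt_half (hd : d ≠ 0) : bExp d c D < d / 2 :=
  sub_lt_self _ (Real.sqrt_pos.2 (radicand_pos c D (Nat.cast_ne_zero.2 hd)))

theorem one_le_bExp_iff (hd : 2 ≤ d) : 1 ≤ bExp d c D ↔ c ^ 2 + 1 ≤ ((d : ℝ) - 2) * c * D := by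
  have hd' : (2 : ℝ) ≤ d := by exact_mod_cast hd
  rw [bExp_eq_sub_sqrt_radicand, le_sub_comm, Real.sqrt_le_left (by linarith),
    radicand_le_sq_iff c D (by linarith)]

theorem bExp_eq_one_iff (hd : 2 ≤ d) : bExp d c D = 1 ↔ ((d : ℝ) - 2) * c * D = c ^ 2 + 1 := by
  have hd' : (2 : ℝ) ≤ d := by exact_mod_cast hd
  rw [bExp_eq_sub_sqrt_radicand, sub_eq_iff_eq_add', eq_comm, ← eq_sub_iff_add_eq,
    Real.sqrt_eq_iff_eq_sq (radicand_pos c D (by linarith)).le (by linarith),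
    radicand_eq_sq_iff c D (by linarith)]

end Exponent

/-- for `d ≥ 3`, `c > 0` and `D ≥ (c²+1)/((d-2)c)`, the radicand in the
definition of `b` is nonnegative, `1 ≤ b < d/2`, and `b = 1` iff `D = (c²+1)/((d-2)c)`. -/
theorem stmt_8 (d : ℕ) (hd : 3 ≤ d) (c D : ℝ) (hc : 0 < c)
    (hD : (c ^ 2 + 1) / (((d : ℝ) - 2) * c) ≤ D) :
    0 ≤ (d : ℝ) ^ 2 / 4 -
        ((d : ℝ) * ((d : ℝ) - 1) * c * D + ((d : ℝ) - 1) * D ^ 2) / (1 + (c + D) ^ 2) ∧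
      1 ≤ bExp d c D ∧ bExp d c D < (d : ℝ) / 2 ∧
      (bExp d c D = 1 ↔ D = (c ^ 2 + 1) / (((d : ℝ) - 2) * c)) := by
  have hd' : (3 : ℝ) ≤ d := by exact_mod_cast hd
  have hden : 0 < ((d : ℝ) - 2) * c := mul_pos (by linarith) hc
  refine ⟨(radicand_pos c D (by linarith)).le,
    (one_le_bExp_iff c D (by omega)).2 ((div_le_iff₀' hden).1 hD),
    bExp_lt_half c D (by omega), ?_⟩
  rw [bExp_eq_one_iff c D (by omega), eq_div_iff hden.ne', mul_comm D]
end

section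
/- The function g(q) := ln(2q−2) − q(q−2)/(2(q−1)) has a unique zero σ on the interval (2, ∞), and 5.69 < σ < 5.70. Moreover, σ is the global minimizer of f(q) := (2q/(q−2)) · ln(2q−2) on (2, ∞): for every q > 2, f(q) ≥ f(σ). -/
/-!
The functions are linked by `f' = -(4/(q-2)²) g`, and `g' = -(q-2)²/(2(q-1)²) < 0`
on `(2, ∞)`. So `g` is strictly decreasing there, its zero `σ` is unique, `f` decreases up to `σ`
and increases after it, and the bounds on `σ` come from the signs `g(5.69) > 0 > g(5.70)`,
i.e. from `exp(20.9961/9.38) < 9.38` and `9.40 < exp(21.09/9.40)`.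
-/

open Real Set

namespace LogRatio

noncomputable def g (q : ℝ) : ℝ := log (2 * q - 2) - q * (q - 2) / (2 * (q - 1))

noncomputable def f (q : ℝ) : ℝ := (2 * q / (q - 2)) * log (2 * q - 2)

lemma hasDerivAt_log_two_mul_sub_two {q : ℝ} (hq : 1 < q) :
    HasDerivAt (fun q : ℝ => log (2 * q - 2)) (1 / (q - 1)) q := by
  have hlin : HasDerivAt (fun q : ℝ => 2 * q - 2) 2 q := by
    simpa using ((hasDerivAt_id q).const_mul 2).sub_const 2
  refine ((hasDerivAt_log (by linarith)).comp q hlin).congr_deriv ?_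
  field_simp [show q - 1 ≠ 0 by linarith]

lemma hasDerivAt_g {q : ℝ} (hq : 1 < q) :
    HasDerivAt g (-(q - 2) ^ 2 / (2 * (q - 1) ^ 2)) q := by
  have hv : HasDerivAt (fun q : ℝ => 2 * (q - 1)) 2 q := by
    simpa using ((hasDerivAt_id q).sub_const 1).const_mul 2
  have hu : HasDerivAt (fun q : ℝ => q * (q - 2)) (1 * (q - 2) + q * 1) q :=
    (hasDerivAt_id q).mul ((hasDerivAt_id q).sub_const 2)
  refine ((hasDerivAt_log_two_mul_sub_two hq).sub (hu.div hv (by linarith))).congr_deriv ?_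
  field_simp [show q - 1 ≠ 0 by linarith]
  ring

lemma hasDerivAt_f {q : ℝ} (hq : 2 < q) :
    HasDerivAt f (-(4 / (q - 2) ^ 2) * g q) q := by
  have hu : HasDerivAt (fun q : ℝ => 2 * q / (q - 2))
      ((2 * 1 * (q - 2) - 2 * q * 1) / (q - 2) ^ 2) q :=
    ((hasDerivAt_id q).const_mul 2).div ((hasDerivAt_id q).sub_const 2) (by linarith)
  refine (hu.mul (hasDerivAt_log_two_mul_sub_two (by linarith))).congr_deriv ?_
  unfold g
  field_simp [show q - 1 ≠ 0 by linarith, show q - 2 ≠ 0 by linarith]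
  ring

lemma g_strictAntiOn : StrictAntiOn g (Ici 2) := by
  refine strictAntiOn_of_deriv_neg (convex_Ici 2)
    (fun x hx => (hasDerivAt_g (by linarith [mem_Ici.mp hx])).continuousAt.continuousWithinAt)
    fun x hx => ?_
  rw [interior_Ici] at hx
  have hx : 2 < x := hx
  rw [(hasDerivAt_g (by linarith)).deriv]
  exact div_neg_of_neg_of_pos (by nlinarith) (by nlinarith)

lemma exp_lt_nine_point_three_eight : exp (20.9961 / 9.38) < 9.38 := by
  have hr := exp_bound' (x := 22361 / 93800) (by norm_num) (by norm_num) (n := 4) (by norm_num)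
  norm_num [Finset.sum_range_succ, Nat.factorial] at hr
  rw [show (20.9961 : ℝ) / 9.38 = 1 + 1 + 22361 / 93800 by norm_num, exp_add, exp_add]
  nlinarith [exp_one_lt_d9, exp_pos 1, exp_pos (22361 / 93800 : ℝ)]

lemma nine_point_four_lt_exp : (9.40 : ℝ) < exp (21.09 / 9.40) := by
  have hr := sum_le_exp_of_nonneg (x := 229 / 940) (by norm_num) 4
  norm_num [Finset.sum_range_succ, Nat.factorial] at hr
  rw [show (21.09 : ℝ) / 9.40 = 1 + 1 + 229 / 940 by norm_num, exp_add, exp_add]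
  nlinarith [exp_one_gt_d9, exp_pos 1]

lemma g_five_point_six_nine_pos : 0 < g 5.69 := by
  have h := (lt_log_iff_exp_lt (by norm_num)).mpr exp_lt_nine_point_three_eight
  unfold g
  norm_num at h ⊢
  linarith

lemma g_five_point_seven_neg : g 5.70 < 0 := by
  have h := (log_lt_iff_lt_exp (by norm_num)).mpr nine_point_four_lt_exp
  unfold g
  norm_num at h ⊢
  linarith

lemma exists_g_eq_zero : ∃ σ ∈ Ioo (5.69 : ℝ) 5.70, g σ = 0 :=
  intermediate_value_Ioo' (by norm_num)
    (fun x hx => (hasDerivAt_g (by linarith [hx.1])).continuousAt.continuousWithinAt)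
    ⟨g_five_point_seven_neg, g_five_point_six_nine_pos⟩

lemma isMinOn_f {σ : ℝ} (hσ : 2 < σ) (hgσ : g σ = 0) : IsMinOn f (Ioi 2) σ := by
  have deriv_f {x : ℝ} (hx : 2 < x) : deriv f x = -(4 / (x - 2) ^ 2) * g x :=
    (hasDerivAt_f hx).deriv
  have hcoef {x : ℝ} (hx : 2 < x) : 0 < 4 / (x - 2) ^ 2 :=
    div_pos four_pos (pow_pos (by linarith) 2)
  have anti : AntitoneOn f (Ioc 2 σ) := by
    refine antitoneOn_of_deriv_nonpos (convex_Ioc 2 σ)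
      (fun x hx => (hasDerivAt_f hx.1).continuousAt.continuousWithinAt) ?_ fun x hx => ?_
    · rw [interior_Ioc]
      exact fun x hx => (hasDerivAt_f hx.1).differentiableAt.differentiableWithinAt
    rw [interior_Ioc] at hx
    have hgx : 0 < g x := hgσ ▸ g_strictAntiOn hx.1.le hσ.le hx.2
    rw [deriv_f hx.1]
    nlinarith [hcoef hx.1]
  have mono : MonotoneOn f (Ici σ) := by
    refine monotoneOn_of_deriv_nonneg (convex_Ici σ)
      (fun x hx => (hasDerivAt_f (hσ.trans_le hx)).continuousAt.continuousWithinAt) ?_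
      fun x hx => ?_
    · rw [interior_Ici]
      exact fun x hx => (hasDerivAt_f (hσ.trans hx)).differentiableAt.differentiableWithinAt
    rw [interior_Ici] at hx
    have hx2 : 2 < x := hσ.trans hx
    have hgx : g x < 0 := hgσ ▸ g_strictAntiOn hσ.le hx2.le hx
    rw [deriv_f hx2]
    nlinarith [hcoef hx2]
  intro q hq
  rcases le_total q σ with h | h
  · exact anti ⟨hq, h⟩ ⟨hσ, le_rfl⟩ h
  · exact mono self_mem_Ici h h

end LogRatio

/-- the function `g(q) = ln(2q-2) - q(q-2)/(2(q-1))` has a unique zero `σ`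
in `(2,∞)`, `5.69 < σ < 5.70`, and `σ` is the global minimizer of
`f(q) = (2q/(q-2)) ln(2q-2)` on `(2,∞)`. -/
theorem stmt_12 :
    ∃ σ : ℝ, 2 < σ ∧
      Real.log (2 * σ - 2) - σ * (σ - 2) / (2 * (σ - 1)) = 0 ∧
      (∀ q : ℝ, 2 < q → Real.log (2 * q - 2) - q * (q - 2) / (2 * (q - 1)) = 0 → q = σ) ∧
      5.69 < σ ∧ σ < 5.70 ∧
      (∀ q : ℝ, 2 < q →
        (2 * σ / (σ - 2)) * Real.log (2 * σ - 2) ≤ (2 * q / (q - 2)) * Real.log (2 * q - 2)) := by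
  obtain ⟨σ, ⟨hlo, hhi⟩, hgσ⟩ := LogRatio.exists_g_eq_zero
  have hσ : 2 < σ := by linarith
  refine ⟨σ, hσ, hgσ, fun q hq hgq => ?_, hlo, hhi, fun q hq => LogRatio.isMinOn_f hσ hgσ hq⟩
  exact LogRatio.g_strictAntiOn.injOn (mem_Ici.mpr hq.le) (mem_Ici.mpr hσ.le) (hgq.trans hgσ.symm)
end

section
/- Let σ ∈ (2,∞) be the unique real solution of ln(2σ−2) = σ(σ−2)/(2(σ−1)). Suppose c : [2, ∞) → [1, ∞) is a function satisfying: (a) c(2) = 1; (b) c(p) ≤ 2(p−1) for all p ≥ 2; and (c) the interpolation property: whenever 2 ≤ p ≤ q and θ ∈ [0,1] satisfy 1/p = (1−θ)/2 + θ/q, one has c(p) ≤ c(q)^θ. Then for every p with 2 ≤ p ≤ σ, c(p) ≤ exp((σ²/(σ−1)) · (1/2 − 1/p)). -/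
/-!
Interpolate between `p = 2` and `p = σ`: with `θ = (1/2 - 1/p)/(1/2 - 1/σ)` the interpolation
property and the Dragičević–Volberg bound at `σ` give `c(p) ≤ (2σ - 2)^θ`, and the equation
defining `σ` says precisely that `log(2σ - 2)/(1/2 - 1/σ) = σ²/(σ - 1)`.
-/

open Real

noncomputable def interpolationExponent (p q : ℝ) : ℝ := (1 / 2 - 1 / p) / (1 / 2 - 1 / q)

section InterpolationExponent

variable {p q : ℝ}

lemma half_sub_inv_pos (hq : 2 < q) : 0 < 1 / 2 - 1 / q := by
  have : 1 / q < 1 / 2 := one_div_lt_one_div_of_lt two_pos hq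
  linarith

lemma interpolationExponent_nonneg (hp : 2 ≤ p) (hq : 2 < q) : 0 ≤ interpolationExponent p q :=
  div_nonneg (by linarith [one_div_le_one_div_of_le two_pos hp]) (half_sub_inv_pos hq).le

lemma interpolationExponent_le_one (hp : 2 ≤ p) (hpq : p ≤ q) (hq : 2 < q) :
    interpolationExponent p q ≤ 1 := by
  rw [interpolationExponent, div_le_one (half_sub_inv_pos hq)]
  linarith [one_div_le_one_div_of_le (by linarith) hpq]

lemma one_div_eq_interpolationExponent (hq : 2 < q) :
    1 / p = (1 - interpolationExponent p q) / 2 + interpolationExponent p q / q := by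
  have hθ : interpolationExponent p q * (1 / 2 - 1 / q) = 1 / 2 - 1 / p :=
    div_mul_cancel₀ _ (half_sub_inv_pos hq).ne'
  linear_combination hθ

end InterpolationExponent

lemma le_exp_of_interpolation {c : ℝ → ℝ} {q B : ℝ} (hq : 2 < q) (hcq₀ : 0 ≤ c q)
    (hcqB : c q ≤ B) (hB : 0 < B)
    (hc_interp : ∀ p θ : ℝ, 2 ≤ p → p ≤ q → 0 ≤ θ → θ ≤ 1 →
      1 / p = (1 - θ) / 2 + θ / q → c p ≤ (c q) ^ θ)
    {p : ℝ} (hp : 2 ≤ p) (hpq : p ≤ q) :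
    c p ≤ exp (log B / (1 / 2 - 1 / q) * (1 / 2 - 1 / p)) := by
  have hθ₀ := interpolationExponent_nonneg hp hq
  calc c p ≤ (c q) ^ interpolationExponent p q :=
        hc_interp p _ hp hpq hθ₀ (interpolationExponent_le_one hp hpq hq)
          (one_div_eq_interpolationExponent hq)
    _ ≤ B ^ interpolationExponent p q := rpow_le_rpow hcq₀ hcqB hθ₀
    _ = exp (log B / (1 / 2 - 1 / q) * (1 / 2 - 1 / p)) := by
        rw [rpow_def_of_pos hB, interpolationExponent, div_mul_eq_mul_div, mul_div_assoc]

lemma div_half_sub_inv_eq {σ : ℝ} (hσ : 2 < σ) :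
    σ * (σ - 2) / (2 * (σ - 1)) / (1 / 2 - 1 / σ) = σ ^ 2 / (σ - 1) := by
  have hσ₂ : σ - 2 ≠ 0 := by linarith
  have hσ₁ : σ - 1 ≠ 0 := by linarith
  have hσ₀ : σ ≠ 0 := by linarith
  field_simp

theorem stmt_13_general (σ : ℝ) (hσ : 2 < σ)
    (hσeq : Real.log (2 * σ - 2) = σ * (σ - 2) / (2 * (σ - 1)))
    (c : ℝ → ℝ)
    (hc_range : ∀ p : ℝ, 2 ≤ p → 1 ≤ c p)
    (hcDV : ∀ p : ℝ, 2 ≤ p → c p ≤ 2 * (p - 1))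
    (hc_interp : ∀ p q θ : ℝ, 2 ≤ p → p ≤ q → 0 ≤ θ → θ ≤ 1 →
      1 / p = (1 - θ) / 2 + θ / q → c p ≤ (c q) ^ θ) :
    ∀ p : ℝ, 2 ≤ p → p ≤ σ → c p ≤ Real.exp ((σ ^ 2 / (σ - 1)) * (1 / 2 - 1 / p)) := by
  intro p hp hpσ
  have hcσ : c σ ≤ 2 * σ - 2 := by linarith [hcDV σ hσ.le]
  have h := le_exp_of_interpolation hσ (zero_le_one.trans (hc_range σ hσ.le)) hcσ
    (by linarith) (fun p θ => hc_interp p σ θ) hp hpσ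
  rwa [hσeq, div_half_sub_inv_eq hσ] at h

/-- if `σ ∈ (2,∞)` solves `ln(2σ-2) = σ(σ-2)/(2(σ-1))` and `c : [2,∞) → [1,∞)`
satisfies `c(2) = 1`, `c(p) ≤ 2(p-1)` and the Riesz–Thorin interpolation property, then
`c(p) ≤ exp((σ²/(σ-1))(1/2 - 1/p))` for all `2 ≤ p ≤ σ`. -/
theorem stmt_13 (σ : ℝ) (hσ : 2 < σ)
    (hσeq : Real.log (2 * σ - 2) = σ * (σ - 2) / (2 * (σ - 1)))
    (c : ℝ → ℝ)
    (hc_range : ∀ p : ℝ, 2 ≤ p → 1 ≤ c p)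
    (hc2 : c 2 = 1)
    (hcDV : ∀ p : ℝ, 2 ≤ p → c p ≤ 2 * (p - 1))
    (hc_interp : ∀ p q θ : ℝ, 2 ≤ p → p ≤ q → 0 ≤ θ → θ ≤ 1 →
      1 / p = (1 - θ) / 2 + θ / q → c p ≤ (c q) ^ θ) :
    ∀ p : ℝ, 2 ≤ p → p ≤ σ → c p ≤ Real.exp ((σ ^ 2 / (σ - 1)) * (1 / 2 - 1 / p)) :=
  stmt_13_general σ hσ hσeq c hc_range hcDV hc_interp
end

section
/- Let σ ∈ (2,∞) be the unique real solution of ln(2σ−2) = σ(σ−2)/(2(σ−1)). Then for every p with 2 ≤ p ≤ σ, exp((σ²/(σ−1)) · (1/2 − 1/p)) ≤ 2(p−1). -/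
/-!
With `c = σ² / (σ - 1)`, the inequality is `c (1/2 - 1/p) ≤ log (2p - 2)`, and the defining equation
of `σ` says it is an equality at `p = σ`. So it suffices that `x ↦ log (x - 1) + c / x` decreases on
`[2, σ]`: its derivative `1/(x - 1) - c/x²` is nonpositive exactly when `x² / (x - 1) ≤ c`, and
`x² / (x - 1)` is increasing on `[2, ∞)`.
-/

open Real Set

lemma monotoneOn_sq_div_sub_one : MonotoneOn (fun x : ℝ => x ^ 2 / (x - 1)) (Ici 2) := by
  intro x (hx : 2 ≤ x) y (hy : 2 ≤ y) hxy
  rw [div_le_div_iff₀ (by linarith) (by linarith)]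
  -- `y² (x - 1) - x² (y - 1) = (y - x) (xy - x - y)`
  nlinarith [mul_nonneg (sub_nonneg.2 hxy) (by nlinarith : (0 : ℝ) ≤ x * y - x - y)]

lemma antitoneOn_log_sub_one_add_div {a b c : ℝ} (ha : 1 < a)
    (hc : ∀ x ∈ Icc a b, x ^ 2 / (x - 1) ≤ c) :
    AntitoneOn (fun x => log (x - 1) + c / x) (Icc a b) := by
  have hpos : ∀ x ∈ Icc a b, 0 < x - 1 := fun x hx => by linarith [hx.1]
  have hderiv : ∀ x ∈ Icc a b,
      HasDerivAt (fun x => log (x - 1) + c / x) (1 / (x - 1) - c / x ^ 2) x := by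
    intro x hx
    have hlog := ((hasDerivAt_id x).sub_const 1).log (hpos x hx).ne'
    have hinv := (hasDerivAt_inv (by linarith [hpos x hx] : x ≠ 0)).const_mul c
    exact (hlog.add hinv).congr_deriv (by simp only [id]; ring)
  refine antitoneOn_of_hasDerivWithinAt_nonpos (convex_Icc a b)
    (fun x hx => (hderiv x hx).continuousAt.continuousWithinAt)
    (fun x hx => (hderiv x (interior_subset hx)).hasDerivWithinAt) fun x hx => ?_
  have hx := interior_subset hx
  have hx1 := hpos x hx
  have hsq : x ^ 2 ≤ c * (x - 1) := (div_le_iff₀ hx1).1 (hc x hx)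
  rw [sub_nonpos, div_le_div_iff₀ hx1 (by nlinarith)]
  linarith

/-- if `σ ∈ (2,∞)` solves `ln(2σ-2) = σ(σ-2)/(2(σ-1))`, then for all
`2 ≤ p ≤ σ` one has `exp((σ²/(σ-1))(1/2 - 1/p)) ≤ 2(p-1)`. -/
theorem stmt_14 (σ : ℝ) (hσ : 2 < σ)
    (hσeq : Real.log (2 * σ - 2) = σ * (σ - 2) / (2 * (σ - 1))) :
    ∀ p : ℝ, 2 ≤ p → p ≤ σ →
      Real.exp ((σ ^ 2 / (σ - 1)) * (1 / 2 - 1 / p)) ≤ 2 * (p - 1) := by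
  intro p hp2 hpσ
  set c := σ ^ 2 / (σ - 1)
  have hdecr : log (σ - 1) + c / σ ≤ log (p - 1) + c / p :=
    antitoneOn_log_sub_one_add_div one_lt_two
      (fun x hx => monotoneOn_sq_div_sub_one hx.1 hσ.le hx.2) ⟨hp2, hpσ⟩ ⟨hσ.le, le_rfl⟩ hpσ
  have hlog_two_mul (x : ℝ) (hx : 1 < x) : log (2 * x - 2) = log 2 + log (x - 1) := by
    rw [← log_mul two_ne_zero (by linarith)]; ring_nf
  have hσval : log 2 + log (σ - 1) = c / 2 - c / σ := by
    rw [← hlog_two_mul σ (by linarith), hσeq]; field_simp; ring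
  rw [mul_sub_one, ← le_log_iff_exp_le (by linarith), hlog_two_mul p (by linarith), mul_sub,
    mul_one_div, mul_one_div]
  linarith
end
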